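/- Fix a function A : {1,2} → ℝ and t ∈ ℝ, and define Qₙ(t) = Σ_{(j₀,...,jₙ)∈{1,2}^{n+1}} exp(t·(A(j₀)+...+A(jₙ)))·μ(j₀,...,jₙ). Then for all n ≥ 2, Q_{n+2}(t) = ((δ(t)² - α(t)²)/4)·Qₙ(t), where δ(t) = Σ_j e^{t A(j)} and α(t) = Σ_j β_j e^{t A(j)}. -/

import Mathlib

open Real

/-- β₁ = sin 2θ, β₂ = -sin 2θ (symbol 0 stands for "1", symbol 1 for "2"). -/
noncomputable def beta (θ : ℝ) : Fin 2 → ℝ := ![sin (2 * θ), -sin (2 * θ)]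

noncomputable def gamma (θ : ℝ) : ℝ := (1 - sin (2 * θ) ^ 2) / 4

/-- a(i,j) = 0 if i = j, 1 otherwise. -/
noncomputable def aCoef (i j : Fin 2) : ℝ := if i = j then 0 else 1

/-- b(i,j) = γ if i = j, -γ otherwise. -/
noncomputable def bCoef (θ : ℝ) (i j : Fin 2) : ℝ := if i = j then gamma θ else -gamma θ

/-- The cylinder measure μ on finite strings over {1,2}. -/
noncomputable def mu (θ : ℝ) : List (Fin 2) → ℝ
  | [] => 1
  | [_] => 1 / 2
  | [i, j] => (1 - beta θ i * beta θ j) / 4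
  | k0 :: k1 :: k2 :: rest =>
      aCoef k0 k1 * mu θ (k1 :: k2 :: rest) + bCoef θ k0 k1 * mu θ (k2 :: rest)
/-- Qₙ(t) = Σ_{(j₀,...,jₙ)} exp(t(A(j₀)+...+A(jₙ))) μ(j₀,...,jₙ). -/
noncomputable def Q (θ : ℝ) (A : Fin 2 → ℝ) (t : ℝ) (n : ℕ) : ℝ :=
  ∑ j : Fin (n + 1) → Fin 2,
    Real.exp (t * ∑ i, A (j i)) * mu θ (List.ofFn j)

/-! Weight each letter `k` by `w k = exp (t A k)`, so the summand of `Qₙ` is multiplicative in the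
weights. Summing the recursion `μ(k₀k₁l) = a(k₀,k₁) μ(k₁l) + b(k₀,k₁) μ(l)` over the two leading
letters and using the consistency `∑ᵢ μ(i l) = μ(l)` leaves the constant factor
`w₀ w₁ + γ (w₀ - w₁)²` in front of the weighted `μ(l)`, and since `4γ = 1 - sin² 2θ` this factor
is `((w₀ + w₁)² - sin² 2θ (w₀ - w₁)²) / 4 = (δ² - α²) / 4`. -/

open Finset

theorem Fintype.sum_ofFn_succ {α M : Type*} [Fintype α] [AddCommMonoid M] (m : ℕ)
    (F : List α → M) :
    ∑ j : Fin (m + 1) → α, F (List.ofFn j) = ∑ k : α, ∑ r : Fin m → α, F (k :: List.ofFn r) := by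
  rw [← (Fin.consEquiv fun _ => α).sum_comp, Fintype.sum_prod_type]
  simp only [Fin.consEquiv_apply, List.ofFn_succ, Fin.cons_zero, Fin.cons_succ]

theorem Fintype.sum_ofFn_add_two {α M : Type*} [Fintype α] [AddCommMonoid M] (m : ℕ)
    (F : List α → M) :
    ∑ j : Fin (m + 2) → α, F (List.ofFn j) =
      ∑ r : Fin m → α, ∑ k₀ : α, ∑ k₁ : α, F (k₀ :: k₁ :: List.ofFn r) := by
  calc ∑ j : Fin (m + 2) → α, F (List.ofFn j)
      = ∑ k₀ : α, ∑ k₁ : α, ∑ r : Fin m → α, F (k₀ :: k₁ :: List.ofFn r) := by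
        rw [Fintype.sum_ofFn_succ]
        exact Finset.sum_congr rfl fun k _ => Fintype.sum_ofFn_succ m fun l => F (k :: l)
    _ = _ := (Finset.sum_congr rfl fun _ _ => Finset.sum_comm).trans Finset.sum_comm

lemma mu_cons_cons (θ : ℝ) (k₀ k₁ : Fin 2) {l : List (Fin 2)} (hl : l ≠ []) :
    mu θ (k₀ :: k₁ :: l) = aCoef k₀ k₁ * mu θ (k₁ :: l) + bCoef θ k₀ k₁ * mu θ l := by
  cases l with
  | nil => exact absurd rfl hl
  | cons _ _ => rfl

lemma sum_mu_cons (θ : ℝ) (l : List (Fin 2)) : ∑ i, mu θ (i :: l) = mu θ l := by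
  match l with
  | [] => simp [mu]
  | [j] => fin_cases j <;> simp [mu, beta, Fin.sum_univ_two] <;> ring
  | j :: _ :: _ => fin_cases j <;> simp [mu, aCoef, bCoef, Fin.sum_univ_two]

noncomputable def weightedMu (θ : ℝ) (w : Fin 2 → ℝ) (l : List (Fin 2)) : ℝ :=
  (l.map w).prod * mu θ l

lemma Q_eq_sum_weightedMu (θ : ℝ) (A : Fin 2 → ℝ) (t : ℝ) (n : ℕ) :
    Q θ A t n =
      ∑ j : Fin (n + 1) → Fin 2, weightedMu θ (fun k => exp (t * A k)) (List.ofFn j) := by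
  simp only [Q, weightedMu, List.map_ofFn, List.prod_ofFn, Function.comp_apply, mul_sum,
    Real.exp_sum]

lemma sum_sum_weightedMu_cons_cons (θ : ℝ) (w : Fin 2 → ℝ) {l : List (Fin 2)} (hl : l ≠ []) :
    ∑ k₀, ∑ k₁, weightedMu θ w (k₀ :: k₁ :: l) =
      ((∑ j, w j) ^ 2 - (∑ j, beta θ j * w j) ^ 2) / 4 * weightedMu θ w l := by
  have hsum := sum_mu_cons θ l
  simp only [weightedMu, List.map_cons, List.prod_cons, Fin.sum_univ_two,
    mu_cons_cons θ _ _ hl] at hsum ⊢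
  simp only [aCoef, bCoef, beta, gamma, Fin.isValue, ↓reduceIte, zero_ne_one, one_ne_zero,
    Matrix.cons_val_zero, Matrix.cons_val_one, Matrix.cons_val_fin_one]
  linear_combination w 0 * w 1 * (l.map w).prod * hsum

theorem Q_recurrence_general (θ : ℝ)
    (A : Fin 2 → ℝ) (t : ℝ) (n : ℕ) :
    Q θ A t (n + 2) =
      (((∑ j : Fin 2, Real.exp (t * A j)) ^ 2
          - (∑ j : Fin 2, beta θ j * Real.exp (t * A j)) ^ 2) / 4) * Q θ A t n := by
  rw [Q_eq_sum_weightedMu, Q_eq_sum_weightedMu, Fintype.sum_ofFn_add_two, mul_sum]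
  refine sum_congr rfl fun r _ => ?_
  exact sum_sum_weightedMu_cons_cons θ _ (by simp)

/-- The two-step recurrence Q_{n+2}(t) = ((δ(t)² - α(t)²)/4) Qₙ(t), where
δ(t) = Σ_j e^{tA(j)} and α(t) = Σ_j β_j e^{tA(j)}. -/
theorem Q_recurrence (θ : ℝ) (hθ : θ ∈ Set.Ioo 0 (π / 2))
    (A : Fin 2 → ℝ) (t : ℝ) (n : ℕ) (hn : 2 ≤ n) :
    Q θ A t (n + 2) =
      (((∑ j : Fin 2, Real.exp (t * A j)) ^ 2
          - (∑ j : Fin 2, beta θ j * Real.exp (t * A j)) ^ 2) / 4) * Q θ A t n :=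
  Q_recurrence_general θ A t n
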